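/- Let X be an n×n matrix with nonnegative entries such that every column has a nonzero entry, and let rc(X) = max over i of (i-th row sum)/(i-th column sum). If a, b ∈ ℝⁿ are nonnegative vectors forming a monotone pair (i.e. (a_i-a_j)(b_i-b_j) ≥ 0 for all i,j), then ∑ a·(Xb) ≤ rc(X) · ∑ X(a·b), where a·v denotes coordinatewise product and ∑ the sum of components. -/
import Mathlib

lemma core_ind : ∀ (n : ℕ) (Y : Fin n → Fin n → ℝ) (C : Fin n → ℝ) (r : ℝ),
    (∀ i j, 0 ≤ Y i j) → (∀ j, 0 ≤ C j) → (∀ j, ∑ i, Y i j ≤ C j) →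
    1 ≤ r → (∀ i, ∑ j, Y i j ≤ r * C i) →
    ∀ (u v : Fin n → ℝ), (∀ i, 0 ≤ u i) → (∀ i, 0 ≤ v i) →
    Monotone u → Monotone v →
    ∑ i, ∑ j, Y i j * (u i * v j) ≤ r * ∑ j, C j * (u j * v j) := by
  intro n
  induction n with
  | zero => intro Y C r _ _ _ _ _ u v _ _ _ _; simp
  | succ n ih =>
    intro Y C r hY hC0 hC hr hR u v hu0 hv0 hu hv
    set u' : Fin (n+1) → ℝ := fun i => u i - u 0 with hu'def
    set v' : Fin (n+1) → ℝ := fun i => v i - v 0 with hv'def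
    have hu'0 : u' 0 = 0 := by simp [hu'def]
    have hv'0 : v' 0 = 0 := by simp [hv'def]
    have hu'nn : ∀ i, 0 ≤ u' i := fun i => sub_nonneg.2 (hu (Fin.zero_le i))
    have hv'nn : ∀ i, 0 ≤ v' i := fun i => sub_nonneg.2 (hv (Fin.zero_le i))
    have hsplit : ∀ i j, Y i j * (u i * v j)
        = Y i j * (u 0 * v 0) + Y i j * (u 0 * v' j)
          + Y i j * (u' i * v 0) + Y i j * (u' i * v' j) := by
      intro i j; simp only [hu'def, hv'def]; ring
    have hsplitR : ∀ j, C j * (u j * v j)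
        = C j * (u 0 * v 0) + C j * (u 0 * v' j)
          + C j * (u' j * v 0) + C j * (u' j * v' j) := by
      intro j; simp only [hu'def, hv'def]; ring
    have hLHS : ∑ i, ∑ j, Y i j * (u i * v j)
        = (∑ i, ∑ j, Y i j * (u 0 * v 0)) + (∑ i, ∑ j, Y i j * (u 0 * v' j))
          + (∑ i, ∑ j, Y i j * (u' i * v 0)) + (∑ i, ∑ j, Y i j * (u' i * v' j)) := by
      simp_rw [hsplit, Finset.sum_add_distrib]
    have hRHS : ∑ j, C j * (u j * v j)
        = (∑ j, C j * (u 0 * v 0)) + (∑ j, C j * (u 0 * v' j))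
          + (∑ j, C j * (u' j * v 0)) + (∑ j, C j * (u' j * v' j)) := by
      simp_rw [hsplitR, Finset.sum_add_distrib]
    -- column sum bound
    have hcolsum : ∀ (w : Fin (n+1) → ℝ), (∀ j, 0 ≤ w j) →
        ∑ i, ∑ j, Y i j * w j ≤ ∑ j, C j * w j := by
      intro w hw
      rw [Finset.sum_comm]
      refine Finset.sum_le_sum fun j _ => ?_
      rw [← Finset.sum_mul]
      exact mul_le_mul_of_nonneg_right (hC j) (hw j)
    -- term 1
    have h1 : ∑ i, ∑ j, Y i j * (u 0 * v 0) ≤ r * ∑ j, C j * (u 0 * v 0) := by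
      have h := hcolsum (fun _ => u 0 * v 0) (fun _ => mul_nonneg (hu0 0) (hv0 0))
      have hnn : 0 ≤ ∑ j, C j * (u 0 * v 0) :=
        Finset.sum_nonneg fun j _ => mul_nonneg (hC0 j) (mul_nonneg (hu0 0) (hv0 0))
      nlinarith
    -- term 2
    have h2 : ∑ i, ∑ j, Y i j * (u 0 * v' j) ≤ r * ∑ j, C j * (u 0 * v' j) := by
      have h := hcolsum (fun j => u 0 * v' j) (fun j => mul_nonneg (hu0 0) (hv'nn j))
      have hnn : 0 ≤ ∑ j, C j * (u 0 * v' j) :=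
        Finset.sum_nonneg fun j _ => mul_nonneg (hC0 j) (mul_nonneg (hu0 0) (hv'nn j))
      nlinarith
    -- term 3
    have h3 : ∑ i, ∑ j, Y i j * (u' i * v 0) ≤ r * ∑ j, C j * (u' j * v 0) := by
      have : ∀ i, ∑ j, Y i j * (u' i * v 0) ≤ r * (C i * (u' i * v 0)) := by
        intro i
        rw [← Finset.sum_mul]
        have : (∑ j, Y i j) * (u' i * v 0) ≤ (r * C i) * (u' i * v 0) :=
          mul_le_mul_of_nonneg_right (hR i) (mul_nonneg (hu'nn i) (hv0 0))
        linarith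
      calc ∑ i, ∑ j, Y i j * (u' i * v 0) ≤ ∑ i, r * (C i * (u' i * v 0)) :=
            Finset.sum_le_sum fun i _ => this i
        _ = r * ∑ j, C j * (u' j * v 0) := by rw [Finset.mul_sum]
    -- term 4
    have h4 : ∑ i, ∑ j, Y i j * (u' i * v' j) ≤ r * ∑ j, C j * (u' j * v' j) := by
      have hL4 : ∑ i, ∑ j, Y i j * (u' i * v' j)
          = ∑ i : Fin n, ∑ j : Fin n, Y i.succ j.succ * (u' i.succ * v' j.succ) := by
        rw [Fin.sum_univ_succ]
        simp only [hu'0, hv'0, zero_mul, mul_zero, Finset.sum_const_zero, zero_add]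
        refine Finset.sum_congr rfl fun i _ => ?_
        rw [Fin.sum_univ_succ]
        simp [hv'0]
      have hR4 : ∑ j, C j * (u' j * v' j)
          = ∑ j : Fin n, C j.succ * (u' j.succ * v' j.succ) := by
        rw [Fin.sum_univ_succ]
        simp [hu'0]
      rw [hL4, hR4]
      refine ih (fun i j => Y i.succ j.succ) (fun j => C j.succ) r
        (fun i j => hY _ _) (fun j => hC0 _) ?_ hr ?_
        (fun i => u' i.succ) (fun i => v' i.succ) (fun i => hu'nn _) (fun i => hv'nn _)
        ?_ ?_
      · intro j
        have h := hC j.succ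
        rw [Fin.sum_univ_succ] at h
        have := hY 0 j.succ
        linarith
      · intro i
        have h := hR i.succ
        rw [Fin.sum_univ_succ] at h
        have := hY i.succ 0
        linarith
      · intro i j hij
        exact sub_le_sub_right (hu (Fin.succ_le_succ_iff.mpr hij)) _
      · intro i j hij
        exact sub_le_sub_right (hv (Fin.succ_le_succ_iff.mpr hij)) _
    rw [hLHS, hRHS, mul_add, mul_add, mul_add]
    linarith

open Matrix

theorem rc_chebyshev {n : ℕ} [NeZero n] (X : Matrix (Fin n) (Fin n) ℝ)
    (hX : ∀ i j, 0 ≤ X i j) (hcol : ∀ j, ∃ i, X i j ≠ 0)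
    (a b : Fin n → ℝ) (ha : ∀ i, 0 ≤ a i) (hb : ∀ i, 0 ≤ b i)
    (hmono : ∀ i j, 0 ≤ (a i - a j) * (b i - b j)) :
    ∑ i, a i * X.mulVec b i ≤
      (Finset.univ.sup' Finset.univ_nonempty
          (fun i => (∑ k, X i k) / (∑ k, X k i))) * ∑ i, X.mulVec (a * b) i := by
  set r : ℝ := Finset.univ.sup' Finset.univ_nonempty
      (fun i => (∑ k, X i k) / (∑ k, X k i)) with hrdef
  have hClpos : ∀ i, 0 < ∑ k, X k i := by
    intro i
    obtain ⟨k, hk⟩ := hcol i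
    exact Finset.sum_pos' (fun k _ => hX k i)
      ⟨k, Finset.mem_univ k, lt_of_le_of_ne (hX k i) (Ne.symm hk)⟩
  have hrR : ∀ i, ∑ k, X i k ≤ r * ∑ k, X k i := by
    intro i
    have h := Finset.le_sup' (fun i => (∑ k, X i k) / (∑ k, X k i)) (Finset.mem_univ i)
    rw [← hrdef] at h
    exact (div_le_iff₀ (hClpos i)).mp h
  have hr1 : (1:ℝ) ≤ r := by
    have hex : ∃ i, ∑ k, X k i ≤ ∑ k, X i k := by
      by_contra h
      push_neg at h
      have hlt : ∑ i, ∑ k, X i k < ∑ i, ∑ k, X k i :=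
        Finset.sum_lt_sum_of_nonempty Finset.univ_nonempty (fun i _ => h i)
      rw [Finset.sum_comm] at hlt
      exact lt_irrefl _ hlt
    obtain ⟨i, hi⟩ := hex
    have h1 : (1:ℝ) ≤ (∑ k, X i k) / (∑ k, X k i) := (one_le_div (hClpos i)).2 hi
    have h2 := Finset.le_sup' (fun i => (∑ k, X i k) / (∑ k, X k i)) (Finset.mem_univ i)
    rw [← hrdef] at h2
    exact h1.trans h2
  -- sorting permutation
  set s : Fin n → ℝ := fun i => a i + b i with hsdef
  set σ : Equiv.Perm (Fin n) := Tuple.sort s with hσdef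
  have hs : Monotone (s ∘ σ) := Tuple.monotone_sort s
  have hkey : ∀ p q, s p ≤ s q → a p ≤ a q ∧ b p ≤ b q := by
    intro p q h
    simp only [hsdef] at h
    constructor <;> nlinarith [hmono p q, hmono q p]
  have hua : Monotone (fun i => a (σ i)) := fun i j hij => (hkey _ _ (hs hij)).1
  have hvb : Monotone (fun i => b (σ i)) := fun i j hij => (hkey _ _ (hs hij)).2
  have main := core_ind n (fun i j => X (σ i) (σ j)) (fun j => ∑ k, X k (σ j)) r
      (fun i j => hX _ _) (fun j => (hClpos (σ j)).le)
      (fun j => le_of_eq (Equiv.sum_comp σ (fun i => X i (σ j))))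
      hr1
      (fun i => le_of_eq (Equiv.sum_comp σ (fun j => X (σ i) j)) |>.trans (hrR (σ i)))
      (fun i => a (σ i)) (fun i => b (σ i)) (fun i => ha _) (fun i => hb _) hua hvb
  have hL : ∑ i, a i * X.mulVec b i
      = ∑ i, ∑ j, X (σ i) (σ j) * (a (σ i) * b (σ j)) := by
    rw [← Equiv.sum_comp σ (fun i => a i * X.mulVec b i)]
    refine Finset.sum_congr rfl fun i _ => ?_
    rw [mulVec, dotProduct, ← Equiv.sum_comp σ (fun j => X (σ i) j * b j), Finset.mul_sum]
    exact Finset.sum_congr rfl fun j _ => by ring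
  have hR : ∑ i, X.mulVec (a * b) i
      = ∑ j, (∑ k, X k (σ j)) * (a (σ j) * b (σ j)) := by
    have h1 : ∑ i, X.mulVec (a * b) i = ∑ j, (∑ k, X k j) * (a j * b j) := by
      simp only [mulVec, dotProduct, Pi.mul_apply]
      rw [Finset.sum_comm]
      refine Finset.sum_congr rfl fun j _ => ?_
      rw [Finset.sum_mul]
    rw [h1, ← Equiv.sum_comp σ (fun j => (∑ k, X k j) * (a j * b j))]
  rw [hL, hR]
  exact main
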